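/- If a quadtree of maximum depth H on a 2^H × 2^H image refines only nodes intersecting a set E of marked pixels with |E| = k, then the sequence length (number of leaves) is O(k·log(Z)) where Z = 2^H, i.e., at most 1 + 3·k·log2(Z). -/
import Mathlib


/-- A quadtree: every node is a leaf or has exactly 4 children. -/
inductive QuadTree where
  | leaf : QuadTree
  | node : QuadTree → QuadTree → QuadTree → QuadTree → QuadTree

/-- Number of leaves. -/
def QuadTree.leaves : QuadTree → ℕ
  | .leaf => 1
  | .node a b c d => a.leaves + b.leaves + c.leaves + d.leaves

/-- Number of internal nodes at a given depth below the root. -/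
def QuadTree.internalsAt : QuadTree → ℕ → ℕ
  | .leaf, _ => 0
  | .node _ _ _ _, 0 => 1
  | .node a b c d, h + 1 =>
      a.internalsAt h + b.internalsAt h + c.internalsAt h + d.internalsAt h

/-- The edge-driven quadtree on the square with lower-left corner `(x, y)` and side `2^h`:
a node of positive side is subdivided into its four quadrants iff its square contains a
marked pixel of `E`; at side `1` (depth `H`) it is a leaf. -/
def QuadTree.build (E : Finset (ℕ × ℕ)) : ℕ → ℕ → ℕ → QuadTree
  | 0, _, _ => .leaf
  | h + 1, x, y =>
      if (E.filter (fun p =>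
            x ≤ p.1 ∧ p.1 < x + 2 ^ (h + 1) ∧ y ≤ p.2 ∧ p.2 < y + 2 ^ (h + 1))).Nonempty
      then .node (build E h x y) (build E h (x + 2 ^ h) y)
                 (build E h x (y + 2 ^ h)) (build E h (x + 2 ^ h) (y + 2 ^ h))
      else .leaf

/-- If a quadtree of maximum depth `H` on a `2^H × 2^H` image refines only nodes intersecting
the marked-pixel set `E` with `|E| = k`, then the number of leaves (sequence length) is at most
`1 + 3·k·log2 Z` where `Z = 2^H`. -/
theorem edge_quadtree_leaves_log (E : Finset (ℕ × ℕ)) (H : ℕ) (k : ℕ) (hk : E.card = k) :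
    (QuadTree.build E H 0 0).leaves ≤ 1 + 3 * k * Nat.log 2 (2 ^ H) := by
  have key : ∀ h x y, (QuadTree.build E h x y).leaves ≤
      1 + 3 * h * (E.filter (fun p =>
        x ≤ p.1 ∧ p.1 < x + 2 ^ h ∧ y ≤ p.2 ∧ p.2 < y + 2 ^ h)).card := by
    intro h
    induction h with
    | zero => intro x y; simp [QuadTree.build, QuadTree.leaves]
    | succ h ih =>
      intro x y
      rw [QuadTree.build]
      split
      · rename_i hne
        have hp : 2 ^ h + 2 ^ h = 2 ^ (h + 1) := by ring
        set F1 := E.filter (fun p =>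
          x ≤ p.1 ∧ p.1 < x + 2 ^ h ∧ y ≤ p.2 ∧ p.2 < y + 2 ^ h) with hF1
        set F2 := E.filter (fun p =>
          x + 2 ^ h ≤ p.1 ∧ p.1 < x + 2 ^ h + 2 ^ h ∧ y ≤ p.2 ∧ p.2 < y + 2 ^ h) with hF2
        set F3 := E.filter (fun p =>
          x ≤ p.1 ∧ p.1 < x + 2 ^ h ∧ y + 2 ^ h ≤ p.2 ∧ p.2 < y + 2 ^ h + 2 ^ h) with hF3
        set F4 := E.filter (fun p =>
          x + 2 ^ h ≤ p.1 ∧ p.1 < x + 2 ^ h + 2 ^ h ∧ y + 2 ^ h ≤ p.2 ∧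
            p.2 < y + 2 ^ h + 2 ^ h) with hF4
        set F := E.filter (fun p =>
          x ≤ p.1 ∧ p.1 < x + 2 ^ (h + 1) ∧ y ≤ p.2 ∧ p.2 < y + 2 ^ (h + 1)) with hF
        have hd12 : Disjoint F1 F2 := by
          rw [Finset.disjoint_left]; intro a
          simp only [hF1, hF2, Finset.mem_filter]; omega
        have hd123 : Disjoint (F1 ∪ F2) F3 := by
          rw [Finset.disjoint_left]; intro a
          simp only [hF1, hF2, hF3, Finset.mem_union, Finset.mem_filter]; omega
        have hd1234 : Disjoint (F1 ∪ F2 ∪ F3) F4 := by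
          rw [Finset.disjoint_left]; intro a
          simp only [hF1, hF2, hF3, hF4, Finset.mem_union, Finset.mem_filter]; omega
        have hsub : F1 ∪ F2 ∪ F3 ∪ F4 ⊆ F := by
          intro a ha
          simp only [hF1, hF2, hF3, hF4, Finset.mem_union, Finset.mem_filter] at ha
          simp only [hF, Finset.mem_filter]
          rcases ha with ((⟨hE, hco⟩ | ⟨hE, hco⟩) | ⟨hE, hco⟩) | ⟨hE, hco⟩ <;>
            exact ⟨hE, by omega⟩
        have hcard : F1.card + F2.card + F3.card + F4.card ≤ F.card := by
          calc F1.card + F2.card + F3.card + F4.card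
              = (F1 ∪ F2 ∪ F3 ∪ F4).card := by
                rw [Finset.card_union_of_disjoint hd1234,
                  Finset.card_union_of_disjoint hd123,
                  Finset.card_union_of_disjoint hd12]
            _ ≤ F.card := Finset.card_le_card hsub
        have hC : 1 ≤ F.card := Finset.card_pos.mpr hne
        have l1 := ih x y
        have l2 := ih (x + 2 ^ h) y
        have l3 := ih x (y + 2 ^ h)
        have l4 := ih (x + 2 ^ h) (y + 2 ^ h)
        simp only [QuadTree.leaves]
        calc (QuadTree.build E h x y).leaves + (QuadTree.build E h (x + 2 ^ h) y).leaves
              + (QuadTree.build E h x (y + 2 ^ h)).leaves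
              + (QuadTree.build E h (x + 2 ^ h) (y + 2 ^ h)).leaves
            ≤ 4 + 3 * h * (F1.card + F2.card + F3.card + F4.card) := by
              rw [← hF1] at l1; rw [← hF2] at l2; rw [← hF3] at l3; rw [← hF4] at l4
              nlinarith [l1, l2, l3, l4]
          _ ≤ 4 + 3 * h * F.card := by nlinarith [hcard]
          _ ≤ 1 + 3 * (h + 1) * F.card := by nlinarith [hC]
      · simp only [QuadTree.leaves]
        exact Nat.le_add_right 1 _
  have hlog : Nat.log 2 (2 ^ H) = H := Nat.log_pow one_lt_two H
  rw [hlog]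
  calc (QuadTree.build E H 0 0).leaves
      ≤ 1 + 3 * H * (E.filter (fun p =>
          0 ≤ p.1 ∧ p.1 < 0 + 2 ^ H ∧ 0 ≤ p.2 ∧ p.2 < 0 + 2 ^ H)).card := key H 0 0
    _ ≤ 1 + 3 * k * H := by
        have : (E.filter (fun p =>
            0 ≤ p.1 ∧ p.1 < 0 + 2 ^ H ∧ 0 ≤ p.2 ∧ p.2 < 0 + 2 ^ H)).card ≤ k := by
          rw [← hk]; exact Finset.card_filter_le _ _
        nlinarith [this]
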